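/- Let n be a positive integer, let x, y_1, …, y_n be vectors in H, let c_1, …, c_n be complex numbers, let p > 1 and q satisfy 1/p + 1/q = 1, and let γ > 1 and δ satisfy 1/γ + 1/δ = 1. Then |∑_{i=1}^n c_i (x, y_i)|^2 ≤ ‖x‖^2 · max_{1≤i≤n} |c_i| · (∑_{i=1}^n |c_i|^{γq})^{1/(γq)} · (∑_{i=1}^n ∑_{j=1}^n |(y_i, y_j)|)^{1/p} · (∑_{i=1}^n (∑_{j=1}^n |(y_i, y_j)|)^{δ})^{1/(δq)}. -/

import Mathlib

/-! With `z = ∑ cᵢ yᵢ` the sum is `(x, z)`, so Cauchy–Schwarz reduces the claim to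
`‖z‖² ≤ ∑ᵢⱼ |cᵢ| |cⱼ| |(yᵢ, yⱼ)|`. Pulling out `max |cⱼ|` leaves `∑ᵢ |cᵢ| Aᵢ` with
`Aᵢ = ∑ⱼ |(yᵢ, yⱼ)|`; weighted Hölder (weights `Aᵢ`, exponent `q`) followed by Hölder with
exponents `γ, δ` on `∑ᵢ |cᵢ|^q Aᵢ` produces the remaining three factors. -/

open Finset Real

section InnerProduct

variable {𝕜 E ι : Type*} [RCLike 𝕜] [NormedAddCommGroup E] [InnerProductSpace 𝕜 E] [Fintype ι]

theorem norm_sum_smul_sq_le (c : ι → 𝕜) (y : ι → E) :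
    ‖∑ i, c i • y i‖ ^ 2 ≤ ∑ i, ∑ j, ‖c i‖ * ‖c j‖ * ‖inner 𝕜 (y i) (y j)‖ := by
  rw [← inner_self_eq_norm_sq (𝕜 := 𝕜), sum_inner]
  refine (RCLike.re_le_norm _).trans <| (norm_sum_le _ _).trans <| sum_le_sum fun i _ => ?_
  rw [inner_smul_left, inner_sum, mul_sum]
  refine (norm_sum_le _ _).trans <| sum_le_sum fun j _ => ?_
  simp [inner_smul_right, mul_assoc]

theorem norm_sum_mul_inner_sq_le (x : E) (c : ι → 𝕜) (y : ι → E) :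
    ‖∑ i, c i * inner 𝕜 x (y i)‖ ^ 2 ≤
      ‖x‖ ^ 2 * ∑ i, ∑ j, ‖c i‖ * ‖c j‖ * ‖inner 𝕜 (y i) (y j)‖ := by
  have hsum : ∑ i, c i * inner 𝕜 x (y i) = inner 𝕜 x (∑ i, c i • y i) := by
    simp [inner_sum, inner_smul_right]
  calc ‖∑ i, c i * inner 𝕜 x (y i)‖ ^ 2 ≤ (‖x‖ * ‖∑ i, c i • y i‖) ^ 2 := by
        rw [hsum]; gcongr; exact norm_inner_le_norm _ _
    _ = ‖x‖ ^ 2 * ‖∑ i, c i • y i‖ ^ 2 := mul_pow _ _ _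
    _ ≤ _ := by gcongr; exact norm_sum_smul_sq_le c y

end InnerProduct

section Holder

variable {ι : Type*} [Fintype ι]

theorem sum_sum_mul_mul_le_mul_sum (u : ι → ℝ) (a : ι → ι → ℝ) {M : ℝ} (hu : ∀ i, 0 ≤ u i)
    (huM : ∀ i, u i ≤ M) (ha : ∀ i j, 0 ≤ a i j) :
    ∑ i, ∑ j, u i * u j * a i j ≤ M * ∑ i, u i * ∑ j, a i j := by
  simp only [mul_sum]
  refine sum_le_sum fun i _ => sum_le_sum fun j _ => ?_
  calc u i * u j * a i j = u j * (u i * a i j) := by ring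
    _ ≤ M * (u i * a i j) := by gcongr; exacts [mul_nonneg (hu i) (ha i j), huM j]

theorem sum_mul_le_of_holderConjugate {p q g d : ℝ} (hpq : p.HolderConjugate q)
    (hgd : g.HolderConjugate d) (u A : ι → ℝ) (hu : ∀ i, 0 ≤ u i) (hA : ∀ i, 0 ≤ A i) :
    ∑ i, u i * A i ≤
      (∑ i, u i ^ (g * q)) ^ (1 / (g * q)) * (∑ i, A i) ^ (1 / p) *
        (∑ i, A i ^ d) ^ (1 / (d * q)) := by
  have hq : 0 < q := hpq.symm.pos
  have hweighted : ∑ i, u i * A i ≤ (∑ i, A i) ^ (1 / p) * (∑ i, u i ^ q * A i) ^ (1 / q) := by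
    have := inner_le_weight_mul_Lp_of_nonneg univ hpq.symm.lt.le A u hA hu
    rw [hpq.symm.one_sub_inv] at this
    simp only [← one_div] at this
    simpa only [mul_comm (A _)] using this
  have hholder :
      ∑ i, u i ^ q * A i ≤ (∑ i, u i ^ (g * q)) ^ (1 / g) * (∑ i, A i ^ d) ^ (1 / d) := by
    have := inner_le_Lp_mul_Lq_of_nonneg univ hgd (fun i _ => rpow_nonneg (hu i) q)
      fun i _ => hA i
    simpa only [← rpow_mul (hu _), mul_comm q g] using this
  have hu' : 0 ≤ ∑ i, u i ^ (g * q) := sum_nonneg fun i _ => rpow_nonneg (hu i) _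
  have hA' : 0 ≤ ∑ i, A i ^ d := sum_nonneg fun i _ => rpow_nonneg (hA i) _
  calc ∑ i, u i * A i ≤ (∑ i, A i) ^ (1 / p) * (∑ i, u i ^ q * A i) ^ (1 / q) := hweighted
    _ ≤ (∑ i, A i) ^ (1 / p) *
          ((∑ i, u i ^ (g * q)) ^ (1 / g) * (∑ i, A i ^ d) ^ (1 / d)) ^ (1 / q) := by
      gcongr
      · exact rpow_nonneg (sum_nonneg fun i _ => hA i) _
      · exact sum_nonneg fun i _ => mul_nonneg (rpow_nonneg (hu i) q) (hA i)
    _ = _ := by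
      rw [mul_rpow (rpow_nonneg hu' _) (rpow_nonneg hA' _), ← rpow_mul hu', ← rpow_mul hA',
        one_div_mul_one_div, one_div_mul_one_div]
      ring

end Holder

theorem stmt_14 {H : Type*} [NormedAddCommGroup H] [InnerProductSpace ℂ H]
    {n : ℕ} (hn : 0 < n) (x : H) (y : Fin n → H) (c : Fin n → ℂ) (p q : ℝ) (hp : 1 < p) (hpq : 1 / p + 1 / q = 1) (g d : ℝ) (hg : 1 < g) (hgd : 1 / g + 1 / d = 1) :
    ‖∑ i, c i * (inner ℂ x (y i) : ℂ)‖ ^ 2 ≤ ‖x‖ ^ 2 * (Finset.univ.sup' (Finset.univ_nonempty_iff.mpr (Fin.pos_iff_nonempty.mp hn)) (fun i => ‖c i‖)) * (∑ i, ‖c i‖ ^ (g * q)) ^ (1 / (g * q)) * (∑ i, ∑ j, ‖(inner ℂ (y i) (y j) : ℂ)‖) ^ (1 / p) * (∑ i, (∑ j, ‖(inner ℂ (y i) (y j) : ℂ)‖) ^ d) ^ (1 / (d * q)) := by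
  have hpq' : p.HolderConjugate q := holderConjugate_iff.mpr ⟨hp, by simpa only [one_div] using hpq⟩
  have hgd' : g.HolderConjugate d := holderConjugate_iff.mpr ⟨hg, by simpa only [one_div] using hgd⟩
  set M := univ.sup' (univ_nonempty_iff.mpr (Fin.pos_iff_nonempty.mp hn)) fun i => ‖c i‖
  set a : Fin n → Fin n → ℝ := fun i j => ‖inner ℂ (y i) (y j)‖
  have ha : ∀ i j, 0 ≤ a i j := fun i j => norm_nonneg _
  have hM : ∀ i, ‖c i‖ ≤ M := fun i => le_sup' (fun i => ‖c i‖) (mem_univ i)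
  calc ‖∑ i, c i * inner ℂ x (y i)‖ ^ 2 ≤ ‖x‖ ^ 2 * ∑ i, ∑ j, ‖c i‖ * ‖c j‖ * a i j :=
        norm_sum_mul_inner_sq_le x c y
    _ ≤ ‖x‖ ^ 2 * (M * ∑ i, ‖c i‖ * ∑ j, a i j) := by
        gcongr
        exact sum_sum_mul_mul_le_mul_sum _ a (fun i => norm_nonneg _) hM ha
    _ ≤ ‖x‖ ^ 2 * (M * ((∑ i, ‖c i‖ ^ (g * q)) ^ (1 / (g * q)) * (∑ i, ∑ j, a i j) ^ (1 / p) *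
          (∑ i, (∑ j, a i j) ^ d) ^ (1 / (d * q)))) := by
        gcongr
        · exact (norm_nonneg _).trans (hM ⟨0, hn⟩)
        · exact sum_mul_le_of_holderConjugate hpq' hgd' _ _ (fun i => norm_nonneg _)
            fun i => sum_nonneg fun j _ => ha i j
    _ = _ := by ring
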